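/- arXiv:2302.11905 — 2 statements merged into one kernel-verified Lean document; each statement's English description precedes it below -/
import Mathlib

section
/- Let n ≥ 2, let ℓ : Δⁿ → [0,∞)ⁿ be an admissible (ℓ ∈ 𝓛ₙ) proper loss function and let η > 0. If ℓ is η-mixable, then spr(ηℓ) slides freely inside spr(ℓ_log): for every boundary point x of spr(ℓ_log) there exists t ∈ ℝⁿ with x ∈ spr(ηℓ) + t ⊆ spr(ℓ_log). -/
open Real Set Pointwise

noncomputable section

/-- The probability simplex Δⁿ ⊆ ℝⁿ. -/
def simplex (n : ℕ) : Set (Fin n → ℝ) := {p | (∀ i, 0 ≤ p i) ∧ ∑ i, p i = 1}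

/-- The relative interior of the probability simplex. -/
def relintSimplex (n : ℕ) : Set (Fin n → ℝ) := {p | (∀ i, 0 < p i) ∧ ∑ i, p i = 1}

/-- A loss `ℓ` is proper if `⟨ℓ(p),p⟩ ≤ ⟨ℓ(q),p⟩` for all `p, q` in the simplex. -/
def IsProper (n : ℕ) (ℓ : (Fin n → ℝ) → Fin n → ℝ) : Prop :=
  ∀ p ∈ simplex n, ∀ q ∈ simplex n, ∑ i, ℓ p i * p i ≤ ∑ i, ℓ q i * p i

/-- Strict properness: `p` is the unique minimizer of `q ↦ ⟨ℓ(q),p⟩`. -/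
def IsStrictlyProper (n : ℕ) (ℓ : (Fin n → ℝ) → Fin n → ℝ) : Prop :=
  IsProper n ℓ ∧ ∀ p ∈ simplex n, ∀ q ∈ simplex n, q ≠ p →
    ∑ i, ℓ p i * p i < ∑ i, ℓ q i * p i

/-- Domain of the standard parametrization of the simplex. -/
def stdDomain (n : ℕ) : Set (Fin (n - 1) → ℝ) := {s | (∀ i, 0 < s i) ∧ ∑ i, s i < 1}

/-- The standard parametrization of the simplex. -/
def PhiStd (n : ℕ) (s : Fin (n - 1) → ℝ) : Fin n → ℝ :=
  fun j => if h : (j : ℕ) < n - 1 then s ⟨j, h⟩ else 1 - ∑ i, s i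

/-- `i`-th partial derivative of a vector-valued map on ℝ^m. -/
def pdv {m k : ℕ} (f : (Fin m → ℝ) → Fin k → ℝ) (i : Fin m) (s : Fin m → ℝ) : Fin k → ℝ :=
  fderiv ℝ f s (Pi.single i 1)

/-- Second partial derivatives of a vector-valued map on ℝ^m. -/
def pdv2 {m k : ℕ} (f : (Fin m → ℝ) → Fin k → ℝ) (i j : Fin m) (s : Fin m → ℝ) : Fin k → ℝ :=
  fderiv ℝ (fun u => fderiv ℝ f u (Pi.single i 1)) s (Pi.single j 1)

/-- Admissibility (membership in 𝓛ₙ): in the standard coordinates on the relative interior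
of the simplex, `ℓ` is a C² embedding whose image admits a C¹ unit normal field taking
values, up to sign, in the open positive orthant. -/
def IsAdmissible (n : ℕ) (ℓ : (Fin n → ℝ) → Fin n → ℝ) : Prop :=
  ContDiffOn ℝ 2 (fun s => ℓ (PhiStd n s)) (stdDomain n) ∧
  Set.InjOn (fun s => ℓ (PhiStd n s)) (stdDomain n) ∧
  (∀ s ∈ stdDomain n, Function.Injective (fderiv ℝ (fun u => ℓ (PhiStd n u)) s)) ∧
  ∃ N : (Fin (n - 1) → ℝ) → Fin n → ℝ,
    ContDiffOn ℝ 1 N (stdDomain n) ∧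
    (∀ s ∈ stdDomain n, ∑ j, N s j ^ 2 = 1) ∧
    (∀ s ∈ stdDomain n, ∀ i, ∑ j, pdv (fun u => ℓ (PhiStd n u)) i s j * N s j = 0) ∧
    (∀ s ∈ stdDomain n, (∀ j, 0 < N s j) ∨ (∀ j, N s j < 0))

/-- Superprediction set of a loss. -/
def spr (n : ℕ) (ℓ : (Fin n → ℝ) → Fin n → ℝ) : Set (Fin n → ℝ) :=
  {x | (∀ i, 0 ≤ x i) ∧ ∃ q ∈ simplex n, ∀ i, ℓ q i ≤ x i}

/-- The η-exponential projection. -/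
def Eproj (n : ℕ) (η : ℝ) (y : Fin n → ℝ) : Fin n → ℝ := fun i => Real.exp (-η * y i)

/-- Superprediction set of the log loss. -/
def sprLog (n : ℕ) : Set (Fin n → ℝ) := {x | (∀ i, 0 ≤ x i) ∧ ∑ i, Real.exp (-x i) ≤ 1}

/-- `L` slides freely inside `K`. -/
def SlidesFreelyIn {n : ℕ} (L K : Set (Fin n → ℝ)) : Prop :=
  ∀ x ∈ frontier K, ∃ t : Fin n → ℝ,
    x ∈ L + ({t} : Set (Fin n → ℝ)) ∧ L + ({t} : Set (Fin n → ℝ)) ⊆ K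

lemma log_lb (t : ℝ) (ht : -(1/2) ≤ t) : t - 2*t^2 ≤ Real.log (1+t) := by
  have h1 : (0:ℝ) < 1 + t := by linarith
  have h2 : Real.log ((1+t)⁻¹) ≤ (1+t)⁻¹ - 1 := Real.log_le_sub_one_of_pos (by positivity)
  rw [Real.log_inv] at h2
  have h4 : t - 2*t^2 ≤ 1 - (1+t)⁻¹ := by
    have he : 1 - (1+t)⁻¹ = t / (1+t) := by field_simp; ring
    rw [he, le_div_iff₀ h1]
    nlinarith [mul_nonneg (sq_nonneg t) (by linarith : (0:ℝ) ≤ 1 + 2*t)]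
  linarith

lemma key_ineq (n : ℕ) (ℓ : (Fin n → ℝ) → Fin n → ℝ)
    (hrange : ∀ p ∈ simplex n, ∀ i, 0 ≤ ℓ p i)
    (hprop : IsProper n ℓ) (η : ℝ) (hη : 0 < η)
    (hmix : Convex ℝ (Eproj n η '' spr n ℓ))
    (p : Fin n → ℝ) (hp : p ∈ simplex n)
    (q : Fin n → ℝ) (hq : q ∈ simplex n) :
    ∑ i, p i * Real.exp (η * (ℓ p i - ℓ q i)) ≤ 1 := by
  set u : Fin n → ℝ := fun i => Real.exp (-η * ℓ p i) with hu_def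
  set w : Fin n → ℝ := fun i => Real.exp (-η * ℓ q i) with hw_def
  have hupos : ∀ i, 0 < u i := fun i => Real.exp_pos _
  have hu : u ∈ Eproj n η '' spr n ℓ :=
    ⟨ℓ p, ⟨hrange p hp, p, hp, fun i => le_refl _⟩, rfl⟩
  have hw : w ∈ Eproj n η '' spr n ℓ :=
    ⟨ℓ q, ⟨hrange q hq, q, hq, fun i => le_refl _⟩, rfl⟩
  set c : Fin n → ℝ := fun i => w i / u i - 1 with hc_def
  set A : ℝ := ∑ i, p i * c i with hA_def
  set B : ℝ := ∑ i, p i * c i ^ 2 with hB_def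
  set M : ℝ := ∑ i, |c i| with hM_def
  clear_value u w c A B M
  have hB : 0 ≤ B := hB_def ▸ Finset.sum_nonneg fun i _ => mul_nonneg (hp.1 i) (sq_nonneg _)
  have hM0 : 0 ≤ M := hM_def ▸ Finset.sum_nonneg fun i _ => abs_nonneg _
  have hMi : ∀ i, |c i| ≤ M := fun i =>
    hM_def ▸ Finset.single_le_sum (fun j _ => abs_nonneg (c j)) (Finset.mem_univ i)
  have hbound : ∀ s : ℝ, 0 < s → s ≤ 1 → (∀ i, |s * c i| ≤ 1/2) →
      s * A - 2 * s^2 * B ≤ 0 := by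
    intro s hs hs1 hsc
    have hv : (1-s) • u + s • w ∈ Eproj n η '' spr n ℓ :=
      hmix hu hw (by linarith) hs.le (by ring)
    obtain ⟨y, ⟨hy0, r, hr, hry⟩, hyv⟩ := hv
    have hvy : ∀ i, Real.exp (-η * y i) = (1-s) * u i + s * w i := by
      intro i
      have := congrFun hyv i
      simpa [Eproj] using this
    have hcpos : ∀ i, 0 < 1 + s * c i := by
      intro i
      obtain ⟨h1, h2⟩ := abs_le.mp (hsc i)
      nlinarith
    have h1eq : ∀ i, (1-s) * u i + s * w i = u i * (1 + s * c i) := by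
      intro i
      have := (hupos i).ne'
      simp only [hc_def]
      field_simp
      ring
    have hlog : ∀ i, Real.log (1 + s * c i) = -η * y i + η * ℓ p i := by
      intro i
      have h1 : Real.exp (-η * y i) = u i * (1 + s * c i) := by rw [hvy i, h1eq i]
      have h2 := congrArg Real.log h1
      rw [Real.log_exp, Real.log_mul (hupos i).ne' (hcpos i).ne'] at h2
      rw [hu_def] at h2
      simp only [Real.log_exp] at h2
      linarith
    have hchain : ∑ i, ℓ p i * p i ≤ ∑ i, y i * p i :=
      le_trans (hprop p hp r hr)
        (Finset.sum_le_sum fun i _ => mul_le_mul_of_nonneg_right (hry i) (hp.1 i))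
    have hlogsum : ∑ i, p i * Real.log (1 + s * c i) ≤ 0 := by
      have heq : ∑ i, p i * Real.log (1 + s * c i)
          = η * ∑ i, ℓ p i * p i - η * ∑ i, y i * p i := by
        rw [Finset.mul_sum, Finset.mul_sum, ← Finset.sum_sub_distrib]
        exact Finset.sum_congr rfl fun i _ => by rw [hlog i]; ring
      rw [heq]
      have := mul_le_mul_of_nonneg_left hchain hη.le
      linarith
    have hterm : ∀ i, p i * (s * c i - 2 * (s * c i)^2) ≤ p i * Real.log (1 + s * c i) := by
      intro i
      apply mul_le_mul_of_nonneg_left _ (hp.1 i)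
      exact log_lb (s * c i) (by linarith [(abs_le.mp (hsc i)).1])
    have heq2 : s * A - 2 * s^2 * B = ∑ i, p i * (s * c i - 2 * (s * c i)^2) := by
      rw [hA_def, hB_def, Finset.mul_sum, Finset.mul_sum, ← Finset.sum_sub_distrib]
      exact Finset.sum_congr rfl fun i _ => by ring
    rw [heq2]
    exact le_trans (Finset.sum_le_sum fun i _ => hterm i) hlogsum
  have hA : A ≤ 0 := by
    by_contra h
    push_neg at h
    set s : ℝ := min (min 1 (1/(2*M+1))) (A/(4*B+2)) with hs_def
    have hs : 0 < s := by
      apply lt_min (lt_min one_pos (by positivity))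
      positivity
    have hs1 : s ≤ 1 := le_trans (min_le_left _ _) (min_le_left _ _)
    have hsM : s ≤ 1/(2*M+1) := le_trans (min_le_left _ _) (min_le_right _ _)
    have hsA : s ≤ A/(4*B+2) := min_le_right _ _
    have hsc : ∀ i, |s * c i| ≤ 1/2 := by
      intro i
      rw [abs_mul, abs_of_pos hs]
      calc s * |c i| ≤ (1/(2*M+1)) * M := by
            apply mul_le_mul hsM (hMi i) (abs_nonneg _) (by positivity)
        _ ≤ 1/2 := by
            rw [div_mul_eq_mul_div, div_le_div_iff₀ (by positivity) (by norm_num)]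
            linarith
    have hb := hbound s hs hs1 hsc
    have h2sB : 2 * s * B < A := by
      have : s * (4*B+2) ≤ A := by
        rw [le_div_iff₀ (by positivity)] at hsA
        exact hsA
      nlinarith
    nlinarith [mul_pos hs (by linarith : 0 < A - 2 * s * B)]
  have hfin : ∑ i, p i * Real.exp (η * (ℓ p i - ℓ q i)) = 1 + A := by
    have hterm : ∀ i, p i * Real.exp (η * (ℓ p i - ℓ q i)) = p i + p i * c i := by
      intro i
      have h1 : Real.exp (η * (ℓ p i - ℓ q i)) = w i / u i := by
        rw [hw_def, hu_def]
        simp only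
        rw [← Real.exp_sub]
        congr 1
        ring
      rw [h1, hc_def]
      simp only
      ring
    rw [Finset.sum_congr rfl fun i _ => hterm i, Finset.sum_add_distrib, hp.2, hA_def]
  rw [hfin]
  linarith

lemma sprLog_closed (n : ℕ) : IsClosed (sprLog n) := by
  have : sprLog n = (⋂ i, {x : Fin n → ℝ | 0 ≤ x i}) ∩ {x | ∑ i, Real.exp (-x i) ≤ 1} := by
    ext x; simp [sprLog, Set.mem_iInter]
  rw [this]
  exact IsClosed.inter
    (isClosed_iInter fun i => isClosed_le continuous_const (continuous_apply i))
    (isClosed_le (by continuity) continuous_const)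

/-- If an admissible proper loss is η-mixable then `spr(ηℓ)` slides
freely inside the superprediction set of the log loss: for every boundary point `x` of
`spr(ℓ_log)` there is a translation `t` with `x ∈ spr(ηℓ) + t ⊆ spr(ℓ_log)`. -/
theorem mixable_implies_slidesFreely (n : ℕ) (hn : 2 ≤ n)
    (ℓ : (Fin n → ℝ) → Fin n → ℝ)
    (hrange : ∀ p ∈ simplex n, ∀ i, 0 ≤ ℓ p i)
    (hadm : IsAdmissible n ℓ) (hprop : IsProper n ℓ)
    (η : ℝ) (hη : 0 < η)
    (hmix : Convex ℝ (Eproj n η '' spr n ℓ)) :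
    SlidesFreelyIn (spr n (fun p i => η * ℓ p i)) (sprLog n) := by
  intro x hx
  have hx_cl : x ∈ sprLog n := by
    have h := (sprLog_closed n).closure_eq
    have := hx.1
    rwa [h] at this
  -- the exponential sum is exactly 1 on the frontier
  have hS : ∑ i, Real.exp (-x i) = 1 := by
    rcases eq_or_lt_of_le hx_cl.2 with h | h
    · exact h
    · exfalso
      -- x is then an interior point
      have hxpos : ∀ i, 0 < x i := by
        intro i
        by_contra hxi
        push_neg at hxi
        have h1 : (1:ℝ) ≤ Real.exp (-x i) := by
          rw [← Real.exp_zero]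
          exact Real.exp_le_exp.mpr (by linarith)
        set j : Fin n := if i = ⟨0, by omega⟩ then ⟨1, by omega⟩ else ⟨0, by omega⟩ with hj
        have hij : j ≠ i := by
          rw [hj]
          split_ifs with hcase
          · rw [hcase]; simp [Fin.ext_iff]
          · exact fun hc => hcase hc.symm
        have h2 : Real.exp (-x i) + Real.exp (-x j) ≤ ∑ k, Real.exp (-x k) := by
          have := Finset.sum_le_sum_of_subset_of_nonneg
            (Finset.subset_univ {i, j}) (fun k _ _ => (Real.exp_pos (-x k)).le)
          rwa [Finset.sum_pair (fun hc => hij hc.symm)] at this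
        have := Real.exp_pos (-x j)
        linarith [hx_cl.2]
      have hU : x ∈ interior (sprLog n) := by
        apply mem_interior.mpr
        refine ⟨(⋂ i, {y : Fin n → ℝ | 0 < y i}) ∩ {y | ∑ i, Real.exp (-y i) < 1}, ?_, ?_, ?_⟩
        · rintro y ⟨hy1, hy2⟩
          simp only [Set.mem_iInter, Set.mem_setOf_eq] at hy1
          exact ⟨fun i => (hy1 i).le, le_of_lt hy2⟩
        · exact IsOpen.inter
            (isOpen_iInter_of_finite fun i => isOpen_lt continuous_const (continuous_apply i))
            (isOpen_lt (by continuity) continuous_const)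
        · exact ⟨Set.mem_iInter.mpr fun i => hxpos i, h⟩
      exact hx.2 hU
  set p : Fin n → ℝ := fun i => Real.exp (-x i) with hp_def
  have hp : p ∈ simplex n := ⟨fun i => (Real.exp_pos _).le, hS⟩
  refine ⟨fun i => x i - η * ℓ p i, ?_, ?_⟩
  · -- x ∈ spr(ηℓ) + {t}
    refine Set.mem_add.mpr ⟨fun i => η * ℓ p i,
      ⟨fun i => mul_nonneg hη.le (hrange p hp i), p, hp, fun i => le_refl _⟩,
      fun i => x i - η * ℓ p i, Set.mem_singleton _, ?_⟩
    funext i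
    simp only [Pi.add_apply]
    ring
  · -- translate of spr(ηℓ) is inside sprLog
    rintro z' hz'
    rw [Set.mem_add] at hz'
    obtain ⟨z, ⟨hz0, q, hq, hqz⟩, t', ht', rfl⟩ := hz'
    rw [Set.mem_singleton_iff] at ht'
    subst ht'
    simp only at hqz
    have key := key_ineq n ℓ hrange hprop η hη hmix p hp q hq
    have hT : ∑ i, Real.exp (-(z + fun i => x i - η * ℓ p i) i) ≤ 1 := by
      refine le_trans (Finset.sum_le_sum fun i _ => ?_) key
      show Real.exp (-(z i + (x i - η * ℓ p i))) ≤ p i * Real.exp (η * (ℓ p i - ℓ q i))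
      have h1 : Real.exp (-(z i + (x i - η * ℓ p i)))
          = p i * Real.exp (η * ℓ p i - z i) := by
        rw [hp_def]
        simp only
        rw [← Real.exp_add]
        congr 1
        ring
      rw [h1]
      apply mul_le_mul_of_nonneg_left _ (Real.exp_pos (-x i)).le
      exact Real.exp_le_exp.mpr (by have := hqz i; linarith)
    refine ⟨fun i => ?_, hT⟩
    have h1 : Real.exp (-(z + fun i => x i - η * ℓ p i) i) ≤ 1 := by
      refine le_trans ?_ hT
      exact Finset.single_le_sum
        (f := fun k => Real.exp (-(z + fun j => x j - η * ℓ p j) k))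
        (fun k _ => (Real.exp_pos _).le) (Finset.mem_univ i)
    have h2 := Real.exp_le_one_iff.mp h1
    simp only [Pi.add_apply, neg_nonpos] at h2
    simpa [Pi.add_apply] using h2
end
end

section
/- Let n ≥ 2, let ℓ : Δⁿ → [0,∞)ⁿ be an admissible (ℓ ∈ 𝓛ₙ) proper loss function and let η > 0. If ℓ is η-mixable, then spr(ηℓ) is locally embeddable in spr(ℓ_log): for every boundary point x of spr(ℓ_log) there exist a point y ∈ spr(ηℓ) and an open neighborhood U of y in ℝⁿ such that (spr(ηℓ) ∩ U) + x − y ⊆ spr(ℓ_log). -/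
open Real Set Pointwise

noncomputable section

/-- `L` is locally embeddable in `K`. -/
def LocallyEmbeddableIn {n : ℕ} (L K : Set (Fin n → ℝ)) : Prop :=
  ∀ x ∈ frontier K, ∃ y ∈ L, ∃ U : Set (Fin n → ℝ), IsOpen U ∧ y ∈ U ∧
    (fun z => z + x - y) '' (L ∩ U) ⊆ K

lemma aux_support {n : ℕ} {S : Set (Fin n → ℝ)} (hS : Convex ℝ S)
    {p u₀ u : Fin n → ℝ} (hp : ∀ i, 0 ≤ p i)
    (hu₀ : ∀ i, 0 < u₀ i)
    (hu₀S : u₀ ∈ S) (huS : u ∈ S)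
    (hmax : ∀ v ∈ S, ∑ i, p i * Real.log (v i) ≤ ∑ i, p i * Real.log (u₀ i)) :
    ∑ i, p i * (u i / u₀ i) ≤ ∑ i, p i := by
  obtain ⟨a, ha⟩ : ∃ a : Fin n → ℝ, a = fun i => u i / u₀ i - 1 := ⟨_, rfl⟩
  obtain ⟨B, hB⟩ : ∃ B : ℝ, B = 1 + ∑ i, |a i| := ⟨_, rfl⟩
  have habs : (0:ℝ) ≤ ∑ i, |a i| := Finset.sum_nonneg fun i _ => abs_nonneg _
  have hBpos : 0 < B := by rw [hB]; linarith
  have hB1 : 1 ≤ B := by rw [hB]; linarith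
  have haB : ∀ i, |a i| ≤ B := by
    intro i
    have h1 : |a i| ≤ ∑ j, |a j| :=
      Finset.single_le_sum (fun j _ => abs_nonneg (a j)) (Finset.mem_univ i)
    rw [hB]; linarith
  obtain ⟨P, hP⟩ : ∃ P : ℝ, P = ∑ i, p i := ⟨_, rfl⟩
  have hPnn : 0 ≤ P := by rw [hP]; exact Finset.sum_nonneg fun i _ => hp i
  have hstep : ∀ t : ℝ, 0 < t → t ≤ 1 / (2 * B) →
      ∑ i, p i * a i ≤ 2 * t * B ^ 2 * P := by
    intro t ht htB
    have ht2 : t ≤ 1 / 2 := by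
      refine le_trans htB ?_
      rw [div_le_div_iff₀ (by linarith) (by norm_num)]
      linarith
    have hv : (1 - t) • u₀ + t • u ∈ S := hS hu₀S huS (by linarith) ht.le (by ring)
    have hpos1 : ∀ i, (1:ℝ)/2 ≤ 1 + t * a i := by
      intro i
      have h1 : -|a i| ≤ a i := neg_abs_le (a i)
      have h2 : t * |a i| ≤ t * B := mul_le_mul_of_nonneg_left (haB i) ht.le
      have h3 : t * B ≤ 1 / 2 := by
        rw [le_div_iff₀ (by linarith : (0:ℝ) < 2*B)] at htB
        nlinarith
      have h4 : t * (-|a i|) ≤ t * a i := mul_le_mul_of_nonneg_left h1 ht.le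
      nlinarith [h2, h3, h4]
    have hpos1' : ∀ i, (0:ℝ) < 1 + t * a i := fun i => lt_of_lt_of_le (by norm_num) (hpos1 i)
    have hco : ∀ i, ((1 - t) • u₀ + t • u) i = u₀ i * (1 + t * a i) := by
      intro i
      have e0 : ((1 - t) • u₀ + t • u) i = (1 - t) * u₀ i + t * u i := rfl
      have hai : a i = u i / u₀ i - 1 := by rw [ha]
      have h0 : u₀ i ≠ 0 := (hu₀ i).ne'
      rw [e0, hai]
      field_simp
      ring
    have hkey := hmax _ hv
    have hkey2 : ∑ i, p i * Real.log (1 + t * a i) ≤ 0 := by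
      have e1 : ∑ i, p i * Real.log (((1 - t) • u₀ + t • u) i)
          = ∑ i, p i * Real.log (u₀ i) + ∑ i, p i * Real.log (1 + t * a i) := by
        rw [← Finset.sum_add_distrib]
        refine Finset.sum_congr rfl fun i _ => ?_
        rw [hco i, Real.log_mul (hu₀ i).ne' (hpos1' i).ne']
        ring
      rw [e1] at hkey
      linarith
    have hlb : ∀ i, p i * (t * a i - 2 * t ^ 2 * B ^ 2) ≤ p i * Real.log (1 + t * a i) := by
      intro i
      refine mul_le_mul_of_nonneg_left ?_ (hp i)
      have h1 : 1 - 1 / (1 + t * a i) ≤ Real.log (1 + t * a i) := by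
        have h2 := Real.log_le_sub_one_of_pos (inv_pos.mpr (hpos1' i))
        rw [Real.log_inv] at h2
        rw [one_div]
        linarith
      have h5 : t * a i - 2 * t ^ 2 * B ^ 2 ≤ 1 - 1 / (1 + t * a i) := by
        have hd : (0:ℝ) < 1 + t * a i := hpos1' i
        have h3 : 1 - 1 / (1 + t * a i) = t * a i / (1 + t * a i) := by field_simp; ring
        rw [h3, le_div_iff₀ hd]
        have h6 : t ^ 2 * (a i) ^ 2 ≤ t ^ 2 * B ^ 2 := by
          have := haB i
          have h7 : (a i)^2 ≤ B^2 := by nlinarith [abs_nonneg (a i), sq_abs (a i)]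
          nlinarith [sq_nonneg t]
        have h7 : 0 ≤ t ^ 2 * B ^ 2 * (1 + 2 * t * a i) :=
          mul_nonneg (mul_nonneg (sq_nonneg t) (sq_nonneg B)) (by linarith [hpos1 i])
        nlinarith [h6, h7]
      linarith
    have hsum := Finset.sum_le_sum fun i (_ : i ∈ Finset.univ) => hlb i
    have e2 : ∑ i, p i * (t * a i - 2 * t ^ 2 * B ^ 2)
        = t * (∑ i, p i * a i) - 2 * t ^ 2 * B ^ 2 * P := by
      rw [hP, Finset.mul_sum, Finset.mul_sum, ← Finset.sum_sub_distrib]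
      refine Finset.sum_congr rfl fun i _ => by ring
    have h8 : t * (∑ i, p i * a i) - 2 * t ^ 2 * B ^ 2 * P ≤ 0 := by
      rw [← e2]; exact le_trans hsum hkey2
    have e3 : t * (2 * t * B ^ 2 * P) = 2 * t ^ 2 * B ^ 2 * P := by ring
    exact le_of_mul_le_mul_left (by linarith) ht
  have hfin : ∑ i, p i * a i ≤ 0 := by
    by_contra hcon
    push_neg at hcon
    obtain ⟨δ, hδ, hδpos⟩ : ∃ δ : ℝ, δ = ∑ i, p i * a i ∧ 0 < δ := ⟨_, rfl, hcon⟩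
    obtain ⟨C, hC⟩ : ∃ C : ℝ, C = 2 * B ^ 2 * P + 1 := ⟨_, rfl⟩
    have hCpos : 0 < C := by rw [hC]; nlinarith [sq_nonneg B]
    obtain ⟨t, htdef⟩ : ∃ t : ℝ, t = min (1 / (2 * B)) (δ / (2 * C)) := ⟨_, rfl⟩
    have hCpos' : 0 < C := hCpos
    have ht : 0 < t := by
      rw [htdef]
      exact lt_min (by positivity) (by positivity)
    have h1 : ∑ i, p i * a i ≤ 2 * t * B ^ 2 * P :=
      hstep t ht (htdef ▸ min_le_left _ _)
    have h2 : t ≤ δ / (2 * C) := htdef ▸ min_le_right _ _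
    have h3 : t * C ≤ δ / 2 := by
      rw [le_div_iff₀ (by linarith : (0:ℝ) < 2 * C)] at h2
      nlinarith
    have h4 : 2 * t * B ^ 2 * P ≤ t * C := by rw [hC]; nlinarith [ht.le]
    linarith [hδ ▸ hδpos, hδ ▸ h1]
  have e4 : ∑ i, p i * (u i / u₀ i) = ∑ i, p i + ∑ i, p i * a i := by
    rw [← Finset.sum_add_distrib]
    refine Finset.sum_congr rfl fun i _ => ?_
    have hai : a i = u i / u₀ i - 1 := by rw [ha]
    rw [hai]; ring
  linarith

/-- If an admissible proper loss is η-mixable then `spr(ηℓ)` is locally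
embeddable in the superprediction set of the log loss. -/
theorem mixable_implies_locallyEmbeddable (n : ℕ) (hn : 2 ≤ n)
    (ℓ : (Fin n → ℝ) → Fin n → ℝ)
    (hrange : ∀ p ∈ simplex n, ∀ i, 0 ≤ ℓ p i)
    (hadm : IsAdmissible n ℓ) (hprop : IsProper n ℓ)
    (η : ℝ) (hη : 0 < η)
    (hmix : Convex ℝ (Eproj n η '' spr n ℓ)) :
    LocallyEmbeddableIn (spr n (fun p i => η * ℓ p i)) (sprLog n) := by
  intro x hx
  -- sprLog is closed
  have hcont : Continuous fun y : Fin n → ℝ => ∑ i, Real.exp (-y i) :=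
    continuous_finset_sum _ fun i _ => Real.continuous_exp.comp (continuous_apply i).neg
  have hclosed : IsClosed (sprLog n) := by
    have : sprLog n = (⋂ i, {y : Fin n → ℝ | 0 ≤ y i}) ∩
        {y : Fin n → ℝ | ∑ i, Real.exp (-y i) ≤ 1} := by
      ext y; simp [sprLog, Set.mem_iInter]
    rw [this]
    exact (isClosed_iInter fun i =>
      isClosed_le continuous_const (continuous_apply i)).inter
      (isClosed_le hcont continuous_const)
  have hxmem : x ∈ sprLog n := hclosed.frontier_subset hx
  obtain ⟨hxnn, hxsum⟩ := hxmem
  -- all coordinates of x are positive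
  have hxpos : ∀ i, 0 < x i := by
    intro i₀
    by_contra hcon
    push_neg at hcon
    have hx0 : x i₀ = 0 := le_antisymm hcon (hxnn i₀)
    -- pick another index
    obtain ⟨i₁, hne⟩ : ∃ i₁ : Fin n, i₁ ≠ i₀ := by
      rcases Decidable.eq_or_ne i₀ ⟨0, by omega⟩ with h | h
      · exact ⟨⟨1, by omega⟩, by rw [h]; simp [Fin.ext_iff]⟩
      · exact ⟨⟨0, by omega⟩, fun hc => h hc.symm⟩
    have hpair : Real.exp (-x i₀) + Real.exp (-x i₁) ≤ ∑ i, Real.exp (-x i) := by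
      have hsub : ({i₀, i₁} : Finset (Fin n)) ⊆ Finset.univ := Finset.subset_univ _
      calc Real.exp (-x i₀) + Real.exp (-x i₁)
          = ∑ i ∈ ({i₀, i₁} : Finset (Fin n)), Real.exp (-x i) := by
            rw [Finset.sum_pair (Ne.symm hne)]
        _ ≤ ∑ i, Real.exp (-x i) :=
            Finset.sum_le_sum_of_subset_of_nonneg hsub fun i _ _ => (Real.exp_pos _).le
    rw [hx0] at hpair
    simp only [neg_zero, Real.exp_zero] at hpair
    have := Real.exp_pos (-x i₁)
    linarith
  -- the exponential sum equals 1
  have hxeq : ∑ i, Real.exp (-x i) = 1 := by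
    by_contra hcon
    have hlt : ∑ i, Real.exp (-x i) < 1 := lt_of_le_of_ne hxsum hcon
    have hintmem : x ∈ interior (sprLog n) := by
      rw [mem_interior]
      refine ⟨(⋂ i, {y : Fin n → ℝ | 0 < y i}) ∩
        {y : Fin n → ℝ | ∑ i, Real.exp (-y i) < 1}, ?_, ?_, ?_⟩
      · rintro y ⟨hy1, hy2⟩
        rw [Set.mem_iInter] at hy1
        exact ⟨fun i => (hy1 i).le, le_of_lt hy2⟩
      · exact ((isOpen_iInter_of_finite fun i =>
          isOpen_lt continuous_const (continuous_apply i))).inter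
          (isOpen_lt hcont continuous_const)
      · exact ⟨Set.mem_iInter.mpr fun i => hxpos i, hlt⟩
    exact hx.2 hintmem
  -- define p, y
  set p : Fin n → ℝ := fun i => Real.exp (-x i) with hpdef
  have hppos : ∀ i, 0 < p i := fun i => Real.exp_pos _
  have hpmem : p ∈ simplex n := ⟨fun i => (hppos i).le, hxeq⟩
  set y : Fin n → ℝ := fun i => η * ℓ p i with hydef
  have hynn : ∀ i, 0 ≤ y i := fun i => mul_nonneg hη.le (hrange p hpmem i)
  have hymem : y ∈ spr n (fun q i => η * ℓ q i) :=
    ⟨hynn, p, hpmem, fun i => le_refl _⟩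
  -- the key global inequality
  have key : ∀ z ∈ spr n (fun q i => η * ℓ q i),
      ∑ i, Real.exp (-(z i + x i - y i)) ≤ 1 := by
    intro z hz
    obtain ⟨hznn, q, hq, hzq⟩ := hz
    -- u₀ and u in S
    set S := Eproj n η '' spr n ℓ with hSdef
    have hu₀S : Eproj n η (ℓ p) ∈ S :=
      ⟨ℓ p, ⟨hrange p hpmem, p, hpmem, fun i => le_refl _⟩, rfl⟩
    have hwmem : (fun i => z i / η) ∈ spr n ℓ := by
      refine ⟨fun i => div_nonneg (hznn i) hη.le, q, hq, fun i => ?_⟩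
      rw [le_div_iff₀ hη]
      calc ℓ q i * η = η * ℓ q i := mul_comm _ _
        _ ≤ z i := hzq i
    have huS : Eproj n η (fun i => z i / η) ∈ S := ⟨_, hwmem, rfl⟩
    have hu₀pos : ∀ i, 0 < Eproj n η (ℓ p) i := fun i => Real.exp_pos _
    -- maximality of u₀ for the entropy functional
    have hmax : ∀ v ∈ S, ∑ i, p i * Real.log (v i)
        ≤ ∑ i, p i * Real.log (Eproj n η (ℓ p) i) := by
      rintro v ⟨w, ⟨hwnn, r, hr, hwr⟩, rfl⟩
      have e1 : ∀ i, p i * Real.log (Eproj n η w i) = p i * (-η * w i) := by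
        intro i; rw [show Eproj n η w i = Real.exp (-η * w i) from rfl, Real.log_exp]
      have e2 : ∀ i, p i * Real.log (Eproj n η (ℓ p) i) = p i * (-η * ℓ p i) := by
        intro i; rw [show Eproj n η (ℓ p) i = Real.exp (-η * ℓ p i) from rfl, Real.log_exp]
      simp only [e1, e2]
      have h1 : ∑ i, ℓ p i * p i ≤ ∑ i, ℓ r i * p i := hprop p hpmem r hr
      have h2 : ∑ i, ℓ r i * p i ≤ ∑ i, w i * p i :=
        Finset.sum_le_sum fun i _ => mul_le_mul_of_nonneg_right (hwr i) (hppos i).le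
      have e3 : ∑ i, p i * (-η * w i) = -η * ∑ i, w i * p i := by
        rw [Finset.mul_sum]; exact Finset.sum_congr rfl fun i _ => by ring
      have e4 : ∑ i, p i * (-η * ℓ p i) = -η * ∑ i, ℓ p i * p i := by
        rw [Finset.mul_sum]; exact Finset.sum_congr rfl fun i _ => by ring
      rw [e3, e4]
      have : ∑ i, ℓ p i * p i ≤ ∑ i, w i * p i := le_trans h1 h2
      nlinarith
    have hsupp := aux_support hmix (fun i => (hppos i).le) hu₀pos hu₀S huS hmax
    -- rewrite the conclusion
    have e5 : ∀ i, Real.exp (-(z i + x i - y i))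
        = p i * (Eproj n η (fun j => z j / η) i / Eproj n η (ℓ p) i) := by
      intro i
      have hz1 : Eproj n η (fun j => z j / η) i = Real.exp (-z i) := by
        show Real.exp (-η * (z i / η)) = _
        congr 1
        field_simp
      have hy1 : Eproj n η (ℓ p) i = Real.exp (-y i) := by
        show Real.exp (-η * ℓ p i) = Real.exp (-(η * ℓ p i))
        rw [neg_mul]
      rw [hz1, hy1, hpdef]
      rw [← Real.exp_sub, ← Real.exp_add]
      congr 1
      ring
    calc ∑ i, Real.exp (-(z i + x i - y i))
        = ∑ i, p i * (Eproj n η (fun j => z j / η) i / Eproj n η (ℓ p) i) :=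
          Finset.sum_congr rfl fun i _ => e5 i
      _ ≤ ∑ i, p i := hsupp
      _ = 1 := hxeq
  -- assemble
  refine ⟨y, hymem, {z | ∀ i, y i - x i < z i}, ?_, ?_, ?_⟩
  · have : {z : Fin n → ℝ | ∀ i, y i - x i < z i} = ⋂ i, {z | y i - x i < z i} := by
      ext z; simp [Set.mem_iInter]
    rw [this]
    exact isOpen_iInter_of_finite fun i => isOpen_lt continuous_const (continuous_apply i)
  · intro i
    show y i - x i < y i
    linarith [hxpos i]
  · rintro _ ⟨z, ⟨hzspr, hzU⟩, rfl⟩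
    refine ⟨fun i => ?_, ?_⟩
    · show 0 ≤ z i + x i - y i
      have h := hzU i
      linarith
    · show ∑ i, Real.exp (-(z i + x i - y i)) ≤ 1
      exact key z hzspr
end
end
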